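/- arXiv:1509.09075 — 9 statements merged into one kernel-verified Lean document; each statement's English description precedes it below -/
import Mathlib

section
/- Let A be a finite nonempty alphabet, σ a bijection on A, m ≥ 0 an integer, and v = (v(n))_{n≥1} a sequence in A. If the sequence T₀v (defined by (T₀v)(n) = v(2n)) has a finite 2-kernel, and (T₁v)(n+m) = σ(v(n)) for all integers n ≥ 1 (where (T₁v)(n) = v(2n+1)), then v has a finite 2-kernel, i.e. v is 2-automatic. -/
/-- The operator taking a sequence `v` to the sequence `n ↦ v (2n)`. -/
def T0 {A : Type*} (v : ℕ → A) : ℕ → A := fun n => v (2 * n)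

/-- The operator taking a sequence `v` to the sequence `n ↦ v (2n+1)`. -/
def T1 {A : Type*} (v : ℕ → A) : ℕ → A := fun n => v (2 * n + 1)

/-- The 2-kernel of a sequence `v`. -/
def kernel2 {A : Type*} (v : ℕ → A) : Set (ℕ → A) :=
  {w | ∃ i j : ℕ, j < 2 ^ i ∧ w = fun n => v (2 ^ i * n + j)}

/-- Normalizing a dyadic expression with a bounded negative offset into a genuine
kernel-type expression precomposed with a bounded shift. -/
lemma shiftLemma : ∀ t i : ℕ, ∀ j : ℤ, -(t : ℤ) ≤ j → j < 2 ^ i →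
    ∃ r s : ℕ, r < 2 ^ i ∧ s ≤ t ∧
      ∀ n : ℕ, t ≤ n → ((2 : ℤ) ^ i * n + j).toNat = 2 ^ i * (n - s) + r := by
  intro t
  induction t with
  | zero =>
    intro i j hj1 hj2
    have hc : ((2 ^ i : ℕ) : ℤ) = (2 : ℤ) ^ i := by push_cast; ring
    refine ⟨j.toNat, 0, by omega, le_refl _, ?_⟩
    intro n hn
    have hmul : ((2 ^ i * n : ℕ) : ℤ) = (2 : ℤ) ^ i * n := by push_cast; ring
    have hmul2 : ((2 ^ i * (n - 0) : ℕ) : ℤ) = ((2 ^ i * n : ℕ) : ℤ) := by norm_num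
    omega
  | succ t ih =>
    intro i j hj1 hj2
    by_cases hj0 : 0 ≤ j
    · have hc : ((2 ^ i : ℕ) : ℤ) = (2 : ℤ) ^ i := by push_cast; ring
      refine ⟨j.toNat, 0, by omega, Nat.zero_le _, ?_⟩
      intro n hn
      have hmul : ((2 ^ i * n : ℕ) : ℤ) = (2 : ℤ) ^ i * n := by push_cast; ring
      have hmul2 : ((2 ^ i * (n - 0) : ℕ) : ℤ) = ((2 ^ i * n : ℕ) : ℤ) := by norm_num
      omega
    · have hpone : (1 : ℤ) ≤ 2 ^ i := one_le_pow₀ (by norm_num)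
      obtain ⟨r, s, hr, hs, hval⟩ := ih i (j + 2 ^ i) (by omega) (by omega)
      refine ⟨r, s + 1, hr, by omega, ?_⟩
      intro n hn
      have h3 := hval (n - 1) (by omega)
      have hcast : ((n - 1 : ℕ) : ℤ) = (n : ℤ) - 1 := by omega
      have h4 : (2 : ℤ) ^ i * ((n - 1 : ℕ) : ℤ) + (j + 2 ^ i) = (2 : ℤ) ^ i * n + j := by
        rw [hcast]; ring
      rw [h4] at h3
      rw [h3, show (n - 1) - s = n - (s + 1) from by omega]

theorem stmt0 {A : Type*} [Finite A] [Nonempty A] (σ : Equiv.Perm A) (m : ℕ)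
    (v : ℕ → A) (h0 : (kernel2 (T0 v)).Finite)
    (h1 : ∀ n : ℕ, 1 ≤ n → T1 v (n + m) = σ (v n)) :
    (kernel2 v).Finite := by
  classical
  -- Key structural lemma: every kernel-type expression eventually agrees with
  -- `σ^a ∘ f ∘ (· - s)` for `f ∈ kernel2 (T0 v) ∪ {v}` and `s ≤ 2m`.
  have key : ∀ i : ℕ, ∀ j : ℤ, -(2 * (m : ℤ)) ≤ j → j < 2 ^ i →
      ∃ a : ℕ, ∃ f : ℕ → A, ∃ s : ℕ,
        (f ∈ kernel2 (T0 v) ∨ f = v) ∧ s ≤ 2 * m ∧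
        ∀ n : ℕ, 2 * m + 1 ≤ n →
          v (((2 : ℤ) ^ i * n + j).toNat) = (σ ^ a) (f (n - s)) := by
    intro i
    induction i with
    | zero =>
      intro j hj1 hj2
      refine ⟨0, v, (-j).toNat, Or.inr rfl, by omega, ?_⟩
      intro n hn
      have harg : ((2 : ℤ) ^ 0 * n + j).toNat = n - (-j).toNat := by
        norm_num; omega
      rw [harg]
      simp
    | succ i ih =>
      intro j hj1 hj2
      have hpow : (2 : ℤ) ^ (i + 1) = 2 * 2 ^ i := by ring
      have hpone : (1 : ℤ) ≤ 2 ^ i := one_le_pow₀ (by norm_num)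
      have hmono : ∀ n : ℕ, (n : ℤ) ≤ 2 ^ i * n := fun n =>
        le_mul_of_one_le_left (by positivity) hpone
      rcases Int.emod_two_eq j with he | he
      · -- even case
        set j' := j / 2 with hj'def
        have hj'2 : j' < 2 ^ i := by omega
        have hjeq : j = 2 * j' := by omega
        obtain ⟨r, s, hr, hs, hval⟩ := shiftLemma m i j' (by omega) hj'2
        refine ⟨0, fun n => T0 v (2 ^ i * n + r), s, Or.inl ⟨i, r, hr, rfl⟩, by omega, ?_⟩
        intro n hn
        have h5 := hval n (by omega)
        have hX := hmono n
        have h6 : (2 : ℤ) ^ (i + 1) * n = 2 * ((2 : ℤ) ^ i * n) := by ring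
        have h7 : ((2 : ℤ) ^ (i + 1) * n + j).toNat = 2 * ((2 : ℤ) ^ i * n + j').toNat := by
          omega
        rw [h7, h5]
        simp [T0]
      · -- odd case
        set j' := j / 2 with hj'def
        have hj'2 : j' < 2 ^ i := by omega
        have hjeq : j = 2 * j' + 1 := by omega
        obtain ⟨a, f, s, hf, hs, hval⟩ := ih (j' - m) (by omega) (by omega)
        refine ⟨a + 1, f, s, hf, hs, ?_⟩
        intro n hn
        have hX := hmono n
        have hK1 : (m : ℤ) + 1 ≤ 2 ^ i * n + j' := by omega
        set K : ℕ := ((2 : ℤ) ^ i * n + j').toNat with hK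
        have hKge : m + 1 ≤ K := by omega
        have h6 : (2 : ℤ) ^ (i + 1) * n = 2 * ((2 : ℤ) ^ i * n) := by ring
        have h7 : ((2 : ℤ) ^ (i + 1) * n + j).toNat = 2 * K + 1 := by omega
        have h8 := h1 (K - m) (by omega)
        have h9 : K - m + m = K := by omega
        rw [h9] at h8
        have h10 : v (2 * K + 1) = σ (v (K - m)) := h8
        have h11 : (K - m : ℕ) = ((2 : ℤ) ^ i * n + (j' - m)).toNat := by omega
        rw [h7, h10, h11, hval n hn]
        rw [pow_succ']
        simp
  -- The finite set of "eventual shapes".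
  set Fset : Set (ℕ → A) :=
    (fun p : Equiv.Perm A × (ℕ → A) × ℕ => fun n => p.1 (p.2.1 (n - p.2.2))) ''
      ((Set.univ : Set (Equiv.Perm A)) ×ˢ (insert v (kernel2 (T0 v)) ×ˢ Set.Iic (2 * m)))
    with hFdef
  have hFfin : Fset.Finite :=
    (Set.finite_univ.prod ((h0.insert v).prod (Set.finite_Iic _))).image _
  -- The finite set of patched versions of those shapes.
  set P : Set (ℕ → A) :=
    (fun p : (ℕ → A) × (Fin (2 * m + 1) → A) =>
        fun n => if h : n < 2 * m + 1 then p.2 ⟨n, h⟩ else p.1 n) ''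
      (Fset ×ˢ (Set.univ : Set (Fin (2 * m + 1) → A))) with hPdef
  have hPfin : P.Finite := (hFfin.prod Set.finite_univ).image _
  refine hPfin.subset ?_
  rintro w ⟨i, j, hj, rfl⟩
  have hjZ : (j : ℤ) < 2 ^ i := by exact_mod_cast hj
  obtain ⟨a, f, s, hf, hs, hval⟩ := key i j (by omega) hjZ
  refine ⟨(fun n => (σ ^ a) (f (n - s)), fun k => v (2 ^ i * (k : ℕ) + j)),
    ⟨⟨(σ ^ a, f, s), ⟨Set.mem_univ _, ?_, Set.mem_Iic.2 hs⟩, rfl⟩, Set.mem_univ _⟩, ?_⟩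
  · exact hf.elim (fun h => Set.mem_insert_of_mem _ h) (fun h => h ▸ Set.mem_insert _ _)
  · funext n
    by_cases hn : n < 2 * m + 1
    · simp [hn]
    · simp only [dif_neg hn]
      have hc : ((2 ^ i * n + j : ℕ) : ℤ) = (2 : ℤ) ^ i * n + j := by push_cast; ring
      have h2 := hval n (by omega)
      have h3 : ((2 : ℤ) ^ i * n + j).toNat = 2 ^ i * n + j := by omega
      rw [h3] at h2
      exact h2.symm
end

section
/- Let A be a finite nonempty alphabet, σ a bijection on A, m ≥ 0 an integer, and v = (v(n))_{n≥1} a sequence in A. If the sequence T₁v (defined by (T₁v)(n) = v(2n+1)) has a finite 2-kernel, and (T₀v)(n+m) = σ(v(n)) for all integers n ≥ 1 (where (T₀v)(n) = v(2n)), then v has a finite 2-kernel, i.e. v is 2-automatic. -/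
/-! Write `v_{i,j} n = v (2^i n + j)`, allowing integer offsets `j ≥ -2m`. For `n ≥ 1` and
`i > m + 1` the hypotheses give `v_{i,2c+1}` as a member of the 2-kernel of `T1 v` (shifted by one
when `c < 0`) and `v_{i,2c} = σ ∘ v_{i-1,c-m}`, where `2c ≥ -2m` keeps `c - m ≥ -2m`. By induction
on `i`, from `n = 1` on every element of the 2-kernel of `v` is a permutation of one of finitely
many sequences; the value at `n = 0` ranges over the finite alphabet. -/

section

variable {A : Type*}

/-- Negative indices `2^i n + j` are read as `0`. -/
def dyadicSubseq (v : ℕ → A) (i : ℕ) (j : ℤ) : ℕ → A := fun n => v (2 ^ i * n + j).toNat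

def PermTailIn (G : Set (ℕ → A)) (w : ℕ → A) : Prop :=
  ∃ τ : Equiv.Perm A, ∃ g ∈ G, ∀ n, 1 ≤ n → w n = τ (g n)

theorem Set.Finite.of_forall_permTailIn [Finite A] {G S : Set (ℕ → A)} (hG : G.Finite)
    (hS : ∀ w ∈ S, PermTailIn G w) : S.Finite := by
  have := hG.to_subtype
  refine (Set.finite_range fun p : Equiv.Perm A × G × A =>
    fun n => if n = 0 then p.2.2 else p.1 (p.2.1.1 n)).subset ?_
  intro w hw
  obtain ⟨τ, g, hg, hwg⟩ := hS w hw
  refine ⟨(τ, ⟨g, hg⟩, w 0), funext fun n => ?_⟩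
  rcases n with _ | n
  · rfl
  · simp [hwg]

theorem dyadicSubseq_succ_even {σ : Equiv.Perm A} {m : ℕ} {v : ℕ → A}
    (h1 : ∀ n : ℕ, 1 ≤ n → T0 v (n + m) = σ (v n)) {i n : ℕ} {c : ℤ}
    (hc : m + 1 ≤ 2 ^ i * n + c) :
    dyadicSubseq v (i + 1) (2 * c) n = σ (dyadicSubseq v i (c - m) n) := by
  obtain ⟨k, hk⟩ := Int.eq_ofNat_of_zero_le (a := 2 ^ i * n + c - m) (by omega)
  have hk1 : 1 ≤ k := by omega
  have hlhs : (2 ^ (i + 1) * n + 2 * c : ℤ) = ((2 * (k + m) : ℕ) : ℤ) := by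
    push_cast
    rw [pow_succ]
    linarith
  have hrhs : (2 ^ i * n + (c - m) : ℤ) = (k : ℤ) := by linarith
  simp only [dyadicSubseq, hlhs, hrhs, Int.toNat_natCast]
  exact h1 k hk1

theorem exists_kernel2_T1_dyadicSubseq_succ_odd (v : ℕ → A) {i : ℕ} {c : ℤ}
    (hc : -2 ^ i ≤ c) (hc' : c < 2 ^ i) :
    ∃ g ∈ kernel2 (T1 v) ∪ (fun g n => g (n - 1)) '' kernel2 (T1 v),
      ∀ n, 1 ≤ n → dyadicSubseq v (i + 1) (2 * c + 1) n = g n := by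
  have hT1 : ∀ {n k d : ℕ}, (2 ^ i * k + d : ℤ) = 2 ^ i * n + c →
      dyadicSubseq v (i + 1) (2 * c + 1) n = T1 v (2 ^ i * k + d) := by
    intro n k d h
    have : (2 ^ (i + 1) * n + (2 * c + 1) : ℤ) = ((2 * (2 ^ i * k + d) + 1 : ℕ) : ℤ) := by
      push_cast
      rw [pow_succ]
      linarith
    simp only [dyadicSubseq, this, Int.toNat_natCast, T1]
  rcases le_or_gt 0 c with hc0 | hc0
  · lift c to ℕ using hc0
    refine ⟨_, .inl ⟨i, c, by exact_mod_cast hc', rfl⟩, fun n _ => hT1 rfl⟩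
  · obtain ⟨d, hd⟩ := Int.eq_ofNat_of_zero_le (a := 2 ^ i + c) (by omega)
    refine ⟨_, .inr ⟨_, ⟨i, d, by zify; omega, rfl⟩, rfl⟩, fun n hn => hT1 ?_⟩
    push_cast [hn]
    linarith

def kernelSeeds (v : ℕ → A) (m : ℕ) : Set (ℕ → A) :=
  (kernel2 (T1 v) ∪ (fun g n => g (n - 1)) '' kernel2 (T1 v)) ∪
    (fun p : ℕ × ℤ => dyadicSubseq v p.1 p.2) ''
      (Set.Iic (m + 1) ×ˢ Set.Ico (-(2 * m : ℤ)) (2 ^ (m + 1)))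

theorem kernelSeeds_finite {v : ℕ → A} (h0 : (kernel2 (T1 v)).Finite) (m : ℕ) :
    (kernelSeeds v m).Finite :=
  (h0.union (h0.image _)).union (((Set.finite_Iic _).prod (Set.finite_Ico _ _)).image _)

theorem permTailIn_kernelSeeds_dyadicSubseq {σ : Equiv.Perm A} {m : ℕ} {v : ℕ → A}
    (h1 : ∀ n : ℕ, 1 ≤ n → T0 v (n + m) = σ (v n)) (i : ℕ) :
    ∀ j : ℤ, -(2 * m) ≤ j → j < 2 ^ i →
      PermTailIn (kernelSeeds v m) (dyadicSubseq v i j) := by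
  have base : ∀ i ≤ m + 1, ∀ j : ℤ, -(2 * m) ≤ j → j < 2 ^ i →
      PermTailIn (kernelSeeds v m) (dyadicSubseq v i j) := by
    intro i hi j hj hj'
    have : (2 : ℤ) ^ i ≤ 2 ^ (m + 1) := pow_le_pow_right₀ (by norm_num) hi
    exact ⟨1, _, .inr ⟨(i, j), ⟨hi, hj, by omega⟩, rfl⟩, fun _ _ => rfl⟩
  induction i with
  | zero => exact base 0 (Nat.zero_le _)
  | succ i ih =>
    by_cases hi : i + 1 ≤ m + 1
    · exact base (i + 1) hi
    have hpow : (2 * m + 2 : ℤ) ≤ 2 ^ i := by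
      have h₁ : (m : ℤ) < 2 ^ m := by exact_mod_cast Nat.lt_two_pow_self
      have h₂ : (2 : ℤ) ^ m * 2 ≤ 2 ^ i := by
        rw [← pow_succ]
        exact pow_le_pow_right₀ (by norm_num) (by omega)
      omega
    intro j hj hj'
    rw [pow_succ] at hj'
    obtain ⟨c, rfl | rfl⟩ := Int.even_or_odd' j
    · obtain ⟨τ, g, hg, hτ⟩ := ih (c - m) (by omega) (by omega)
      refine ⟨σ * τ, g, hg, fun n hn => ?_⟩
      have : (2 ^ i : ℤ) ≤ 2 ^ i * n :=
        le_mul_of_one_le_right (by positivity) (by exact_mod_cast hn)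
      rw [dyadicSubseq_succ_even h1 (by omega), hτ n hn]
      rfl
    · obtain ⟨g, hg, hgn⟩ :=
        exists_kernel2_T1_dyadicSubseq_succ_odd v (i := i) (c := c) (by omega) (by omega)
      exact ⟨1, g, .inl hg, hgn⟩

end

theorem stmt1_general {A : Type*} [Finite A] (σ : Equiv.Perm A) (m : ℕ)
    (v : ℕ → A) (h0 : (kernel2 (T1 v)).Finite)
    (h1 : ∀ n : ℕ, 1 ≤ n → T0 v (n + m) = σ (v n)) :
    (kernel2 v).Finite := by
  refine (kernelSeeds_finite h0 m).of_forall_permTailIn ?_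
  rintro _ ⟨i, j, hj, rfl⟩
  exact permTailIn_kernelSeeds_dyadicSubseq h1 i j (by omega) (by exact_mod_cast hj)

theorem stmt1 {A : Type*} [Finite A] [Nonempty A] (σ : Equiv.Perm A) (m : ℕ)
    (v : ℕ → A) (h0 : (kernel2 (T1 v)).Finite)
    (h1 : ∀ n : ℕ, 1 ≤ n → T0 v (n + m) = σ (v n)) :
    (kernel2 v).Finite :=
  stmt1_general σ m v h0 h1
end

section
/- Let p be a prime number, s ≥ 1 an integer, q = p^s, and r = p^t with t ≥ 0 an integer. Fix α, β, γ, δ in F_q^* (the nonzero elements of the finite field with q elements) and an integer ℓ ≥ 1. Let u = (u(n))_{n≥1} be a sequence in F_q^* such that for all integers n ≥ 0: u(ℓ+4n+1) = α·(u(2n+1))^r, u(ℓ+4n+2) = β, u(ℓ+4n+3) = γ·(u(2n+2))^r, and u(ℓ+4n+4) = δ. Then the sequence u is 2-automatic, i.e. its 2-kernel is finite. -/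
theorem stmt2 (p : ℕ) (hp : p.Prime) (s : ℕ) (hs : 1 ≤ s) (t : ℕ)
    (F : Type*) [Field F] [Fintype F] (hF : Fintype.card F = p ^ s)
    (α β γ δ : Fˣ) (ℓ : ℕ) (hℓ : 1 ≤ ℓ) (u : ℕ → Fˣ)
    (h : ∀ n : ℕ,
      u (ℓ + 4 * n + 1) = α * u (2 * n + 1) ^ p ^ t ∧
      u (ℓ + 4 * n + 2) = β ∧
      u (ℓ + 4 * n + 3) = γ * u (2 * n + 2) ^ p ^ t ∧
      u (ℓ + 4 * n + 4) = δ) :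
    (kernel2 u).Finite := by
  classical
  -- the two recurrences, reformulated
  have hodd : ∀ k, 1 ≤ k →
      u (ℓ + 2 * k - 1) = (if k % 2 = 1 then α else γ) * u k ^ p ^ t := by
    intro k hk
    obtain ⟨n, hn⟩ : ∃ n, k = 2 * n + 1 ∨ k = 2 * n + 2 := ⟨(k - 1) / 2, by omega⟩
    rcases hn with rfl | rfl
    · have e : ℓ + 2 * (2 * n + 1) - 1 = ℓ + 4 * n + 1 := by omega
      rw [e, if_pos (by omega)]
      exact (h n).1
    · have e : ℓ + 2 * (2 * n + 2) - 1 = ℓ + 4 * n + 3 := by omega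
      rw [e, if_neg (by omega)]
      exact (h n).2.2.1
  have heven : ∀ k, 1 ≤ k →
      u (ℓ + 2 * k) = (if k % 2 = 1 then β else δ) := by
    intro k hk
    obtain ⟨n, hn⟩ : ∃ n, k = 2 * n + 1 ∨ k = 2 * n + 2 := ⟨(k - 1) / 2, by omega⟩
    rcases hn with rfl | rfl
    · have e : ℓ + 2 * (2 * n + 1) = ℓ + 4 * n + 2 := by omega
      rw [e, if_pos (by omega)]
      exact (h n).2.1
    · have e : ℓ + 2 * (2 * n + 2) = ℓ + 4 * n + 4 := by omega
      rw [e, if_neg (by omega)]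
      exact (h n).2.2.2
  -- the finite superset
  set S : Set (ℕ → Fˣ) := {w | ∃ ψ0 ψ1 : Fˣ → Fˣ, ∃ b : ℕ, b ≤ ℓ ∧
    ∀ n, ℓ + 1 ≤ n → w n = (if n % 2 = 0 then ψ0 else ψ1) (u (n + b + 1 - ℓ))} with hS
  have hSfin : S.Finite := by
    have hsub : S ⊆ Set.range
        (fun q : (Fin (ℓ + 1) → Fˣ) × (Fˣ → Fˣ) × (Fˣ → Fˣ) × Fin (ℓ + 1) =>
          fun n => if hn : n < ℓ + 1 then q.1 ⟨n, hn⟩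
            else (if n % 2 = 0 then q.2.1 else q.2.2.1) (u (n + (q.2.2.2 : ℕ) + 1 - ℓ))) := by
      rintro w ⟨ψ0, ψ1, b, hb, hw⟩
      refine ⟨⟨fun i => w i, ψ0, ψ1, ⟨b, by omega⟩⟩, ?_⟩
      funext n
      by_cases hn : n < ℓ + 1
      · simp [hn]
      · simp only [dif_neg hn]
        exact (hw n (by omega)).symm
    exact Set.Finite.subset (Set.finite_range _) hsub
  -- u itself is in S
  have huS : u ∈ S := by
    refine ⟨id, id, ℓ - 1, by omega, fun n hn => ?_⟩
    have e : n + (ℓ - 1) + 1 - ℓ = n := by omega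
    rw [e]
    by_cases h2 : n % 2 = 0 <;> simp [h2]
  -- S is closed under the two decimations
  have hclosed : ∀ w ∈ S, ∀ ε : ℕ, ε ≤ 1 → (fun n => w (2 * n + ε)) ∈ S := by
    rintro w ⟨ψ0, ψ1, b, hb, hw⟩ ε hε
    set ψ : Fˣ → Fˣ := if ε = 0 then ψ0 else ψ1 with hψ
    have hwval : ∀ n, ℓ + 1 ≤ n → w (2 * n + ε) = ψ (u (2 * n + ε + b + 1 - ℓ)) := by
      intro n hn
      rw [hw (2 * n + ε) (by omega)]
      have hpar : (2 * n + ε) % 2 = ε := by omega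
      rw [hpar]
    rcases Nat.even_or_odd (ε + b + 1) with hMe | hMo
    · -- even offset: constant behaviour (only depending on the parity of n)
      obtain ⟨m, hm⟩ := hMe
      have hm1 : 1 ≤ m := by omega
      refine ⟨(fun _ => ψ (if (m + ℓ) % 2 = 1 then β else δ)),
              (fun _ => ψ (if (m + ℓ + 1) % 2 = 1 then β else δ)), b, hb, ?_⟩
      intro n hn
      set k : ℕ := n + m - ℓ with hk
      have hk1 : 1 ≤ k := by omega
      have harg : 2 * n + ε + b + 1 - ℓ = ℓ + 2 * k := by omega
      by_cases hn2 : n % 2 = 0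
      · simp only [if_pos hn2]
        have e : k % 2 = (m + ℓ) % 2 := by omega
        simp only [hwval n hn, harg, heven k hk1, e]
      · simp only [if_neg hn2]
        have e : k % 2 = (m + ℓ + 1) % 2 := by omega
        simp only [hwval n hn, harg, heven k hk1, e]
    · -- odd offset: the recurrence kicks in
      obtain ⟨m, hm⟩ := hMo
      have hmℓ : m ≤ ℓ := by omega
      refine ⟨(fun x => ψ ((if (m + 1 + ℓ) % 2 = 1 then α else γ) * x ^ p ^ t)),
              (fun x => ψ ((if (m + ℓ) % 2 = 1 then α else γ) * x ^ p ^ t)), m, hmℓ, ?_⟩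
      intro n hn
      set k : ℕ := n + m + 1 - ℓ with hk
      have hk1 : 1 ≤ k := by omega
      have harg : 2 * n + ε + b + 1 - ℓ = ℓ + 2 * k - 1 := by omega
      by_cases hn2 : n % 2 = 0
      · simp only [if_pos hn2]
        have e : k % 2 = (m + 1 + ℓ) % 2 := by omega
        simp only [hwval n hn, harg, hodd k hk1, e]
      · simp only [if_neg hn2]
        have e : k % 2 = (m + ℓ) % 2 := by omega
        simp only [hwval n hn, harg, hodd k hk1, e]
  -- the kernel is contained in S
  have hker : kernel2 u ⊆ S := by
    rintro w ⟨i, j, hj, rfl⟩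
    induction i generalizing j with
    | zero =>
      have hj0 : j = 0 := by simpa using hj
      subst hj0
      simpa using huS
    | succ i ih =>
      have h2 : 2 ^ (i + 1) = 2 * 2 ^ i := by rw [pow_succ]; ring
      by_cases hj' : j < 2 ^ i
      · have key : (fun n => u (2 ^ (i + 1) * n + j))
            = (fun n => (fun m => u (2 ^ i * m + j)) (2 * n + 0)) := by
          funext n
          congr 1
          rw [h2]; ring
        rw [key]
        exact hclosed _ (ih j hj') 0 (by norm_num)
      · have hj0 : j - 2 ^ i < 2 ^ i := by omega
        have key : (fun n => u (2 ^ (i + 1) * n + j))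
            = (fun n => (fun m => u (2 ^ i * m + (j - 2 ^ i))) (2 * n + 1)) := by
          funext n
          congr 1
          have e3 : j - 2 ^ i + 2 ^ i = j := by omega
          rw [h2]
          nlinarith [e3]
        rw [key]
        exact hclosed _ (ih (j - 2 ^ i) hj0) 1 (by norm_num)
  exact hSfin.subset hker
end

section
/- Let F_q be the finite field with q = p^s elements (p prime), ε ∈ F_q^*, r = p^t with t ≥ 0 an integer, ℓ ≥ 1 an integer, and (u(n))_{n≥1} a sequence in F_q^* satisfying u(ℓ+m) = ε^{(-1)^m} · (u(m))^r for all integers m ≥ 1. Then the sequence (u(n))_{n≥1} is purely periodic, i.e. there exists an integer N ≥ 1 such that u(n+N) = u(n) for all n ≥ 1. -/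
/-!
The window `(u n, …, u (n + ℓ - 1))` together with the parity of `n` ranges over a finite set and
is moved forward by a single map. Since `x ↦ x ^ p ^ t` is injective on `F_qˣ` (a power of the
Frobenius), that map is injective, so every state is a periodic point of it.
-/

open Function

theorem exists_period_of_injective_step {α : Type*} [Finite α] {f : α → α} (hf : Injective f)
    {x : ℕ → α} (hx : ∀ n, x (n + 1) = f (x n)) : ∃ N, 0 < N ∧ ∀ n, x (n + N) = x n := by
  have hiter : ∀ n, x n = f^[n] (x 0) := by
    intro n
    induction n with
    | zero => rfl
    | succ n ih => rw [hx, ih, iterate_succ_apply']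
  refine ⟨minimalPeriod f (x 0), minimalPeriod_pos_of_mem_periodicPts (hf.mem_periodicPts _),
    fun n => ?_⟩
  rw [hiter, hiter n, iterate_add_minimalPeriod_eq]

section ShiftRegister

variable {α : Type*} {L k : ℕ} (g : ℕ → α → α)

/-- A window of `L + 1` consecutive terms of a sequence with `v (n + L + 1) = g n (v n)`,
paired with `n` modulo a period of `g`, is advanced by this map. -/
def shiftRegisterStep (s : (Fin (L + 1) → α) × ZMod k) : (Fin (L + 1) → α) × ZMod k :=
  (Fin.snoc (Fin.tail s.1) (g s.2.val (s.1 0)), s.2 + 1)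

theorem shiftRegisterStep_injective (hg : ∀ n, Injective (g n)) :
    Injective (shiftRegisterStep (L := L) (k := k) g) := by
  rintro ⟨w, i⟩ ⟨w', i'⟩ h
  simp only [shiftRegisterStep, Prod.mk.injEq, add_left_inj, Fin.snoc_injective2.eq_iff] at h
  obtain ⟨⟨htail, hhead⟩, rfl⟩ := h
  rw [← Fin.cons_self_tail w, ← Fin.cons_self_tail w', htail, hg _ hhead]

theorem shiftRegisterStep_window [NeZero k] (hg : Periodic g k) {v : ℕ → α}
    (hv : ∀ n, v (n + (L + 1)) = g n (v n)) (n : ℕ) :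
    shiftRegisterStep g (fun j : Fin (L + 1) => v (n + j), (n : ZMod k)) =
      (fun j : Fin (L + 1) => v (n + 1 + j), ((n + 1 : ℕ) : ZMod k)) := by
  have hmod : g (n % k) = g n := by
    have := hg.nat_mul (n / k) (n % k)
    rwa [Nat.cast_id, Nat.mod_add_div', eq_comm] at this
  refine Prod.ext (funext fun j => ?_) (by push_cast; rfl)
  induction j using Fin.lastCases with
  | last => simp [shiftRegisterStep, ZMod.val_natCast, hmod, ← hv, add_assoc, add_comm 1]
  | cast j => simp [shiftRegisterStep, Fin.tail, add_assoc, add_comm 1]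

end ShiftRegister

theorem exists_period_of_recurrence {α : Type*} [Finite α] {ℓ k : ℕ} (hℓ : 0 < ℓ) (hk : 0 < k)
    {g : ℕ → α → α} (hg : Periodic g k) (hinj : ∀ n, Injective (g n)) {v : ℕ → α}
    (hv : ∀ n, v (n + ℓ) = g n (v n)) : ∃ N, 0 < N ∧ ∀ n, v (n + N) = v n := by
  obtain ⟨L, rfl⟩ := Nat.exists_eq_add_of_lt hℓ
  have : NeZero k := ⟨hk.ne'⟩
  obtain ⟨N, hN, hper⟩ := exists_period_of_injective_step (shiftRegisterStep_injective g hinj)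
    (x := fun n => (fun j : Fin (L + 1) => v (n + j), (n : ZMod k)))
    (fun n => (shiftRegisterStep_window g hg (by simpa using hv) n).symm)
  exact ⟨N, hN, fun n => by simpa using congrFun (congrArg Prod.fst (hper n)) 0⟩

theorem Units.pow_expChar_pow_injective {R : Type*} [CommRing R] [IsReduced R] (p t : ℕ)
    [ExpChar R p] : Injective fun x : Rˣ => x ^ p ^ t := fun a b hab =>
  Units.ext <| iterateFrobenius_inj R p t <| by
    simpa [iterateFrobenius_def] using congrArg Units.val hab

theorem stmt6_general (p : ℕ) (hp : p.Prime) (s : ℕ) (t : ℕ)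
    (F : Type*) [Field F] [Fintype F] (hF : Fintype.card F = p ^ s)
    (ε : Fˣ) (ℓ : ℕ) (hℓ : 1 ≤ ℓ) (u : ℕ → Fˣ)
    (h : ∀ m : ℕ, 1 ≤ m → u (ℓ + m) = ε ^ ((-1 : ℤ) ^ m) * u m ^ p ^ t) :
    ∃ N : ℕ, 1 ≤ N ∧ ∀ n : ℕ, 1 ≤ n → u (n + N) = u n := by
  have : Fact p.Prime := ⟨hp⟩
  have : CharP F p := charP_of_card_eq_prime_pow hF
  obtain ⟨N, hN, hper⟩ := exists_period_of_recurrence (v := fun n => u (n + 1))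
    (g := fun m x => ε ^ ((-1 : ℤ) ^ (m + 1)) * x ^ p ^ t) hℓ two_pos
    (fun m => by simp [pow_add])
    (fun m => (mul_right_injective _).comp (Units.pow_expChar_pow_injective p t))
    (fun m => by simpa [add_right_comm, add_comm ℓ] using h (m + 1) m.succ_pos)
  refine ⟨N, hN, fun n hn => ?_⟩
  obtain ⟨m, rfl⟩ := Nat.exists_eq_add_of_le' hn
  simpa [add_right_comm] using hper m

theorem stmt6 (p : ℕ) (hp : p.Prime) (s : ℕ) (hs : 1 ≤ s) (t : ℕ)
    (F : Type*) [Field F] [Fintype F] (hF : Fintype.card F = p ^ s)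
    (ε : Fˣ) (ℓ : ℕ) (hℓ : 1 ≤ ℓ) (u : ℕ → Fˣ)
    (h : ∀ m : ℕ, 1 ≤ m → u (ℓ + m) = ε ^ ((-1 : ℤ) ^ m) * u m ^ p ^ t) :
    ∃ N : ℕ, 1 ≤ N ∧ ∀ n : ℕ, 1 ≤ n → u (n + N) = u n :=
  stmt6_general p hp s t F hF ε ℓ hℓ u h
end

section
/- Let p be a prime, r = p^t with t ≥ 1 an integer. The formal Laurent series Θ₂ = Σ_{n≥0} T^{-r^n} in the field F_p((T^{-1})) of power series in 1/T over F_p satisfies Θ₂ = 1/T + Θ₂^r, and Θ₂ is algebraic over the rational function field F_p(T) of degree exactly r. -/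
/-
Over `𝔽_p` with `r = p ^ t`, raising a power series to the `r`-th power is the substitution
`X ↦ X ^ r`, so `Θ ^ r = Σ_{n ≥ 1} X ^ (r ^ n) = Θ - X`. Hence `Θ` is a root of
`Y ^ r - Y + X` over `𝔽_p(X)`. Exchanging the roles of `X` and `Y` turns this polynomial into
`X - (Y - Y ^ r)`, which is linear in `X`, hence irreducible in `𝔽_p[X][Y]`; being monic in `Y`,
it stays irreducible over `𝔽_p(X)` by Gauss's lemma, so it is the minimal polynomial of `Θ`.
-/

/-- The Laurent series `Θ₂ = Σ_{n ≥ 0} T^{-r^n}` in `F_p((T⁻¹))`, where the field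
`F_p((T⁻¹))` of power series in `1/T` is realized as `LaurentSeries (ZMod p)`, the
variable `X` of the Laurent series corresponding to `X = 1/T` (so `T^{-r^n} = X^{r^n}`). -/
noncomputable def theta2 (p r : ℕ) : LaurentSeries (ZMod p) :=
  open Classical in
  ((PowerSeries.mk fun k => if ∃ n : ℕ, k = r ^ n then 1 else 0 : PowerSeries (ZMod p)) :
    LaurentSeries (ZMod p))

open Polynomial

theorem Nat.exists_eq_pow_iff {r n : ℕ} (hr : 2 ≤ r) :
    (∃ m, n = r ^ m) ↔ n = 1 ∨ r ∣ n ∧ ∃ m, n / r = r ^ m := by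
  constructor
  · rintro ⟨_ | m, rfl⟩
    · exact .inl (pow_zero r)
    · exact .inr ⟨dvd_pow_self r m.succ_ne_zero, m, by
        rw [pow_succ, Nat.mul_div_cancel _ (by omega)]⟩
  · rintro (rfl | ⟨hd, m, hm⟩)
    · exact ⟨0, rfl⟩
    · exact ⟨m + 1, by rw [pow_succ, ← hm, Nat.div_mul_cancel hd]⟩

namespace PowerSeries

theorem pow_char_pow_eq_expand (p : ℕ) [Fact p.Prime] (t : ℕ) (f : PowerSeries (ZMod p)) :
    f ^ p ^ t = expand (p ^ t) (pow_ne_zero t (Fact.out : p.Prime).ne_zero) f := by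
  have hid : iterateFrobenius (ZMod p) p t = RingHom.id (ZMod p) := by
    ext x
    rw [iterateFrobenius_def, ZMod.pow_card_pow, RingHom.id_apply]
  rw [← MvPowerSeries.map_iterateFrobenius_expand p (Fact.out : p.Prime).ne_zero f t, hid,
    MvPowerSeries.map_id]
  rfl

open Classical in
noncomputable def sumXPowPow (R : Type*) [CommRing R] (r : ℕ) : PowerSeries R :=
  mk fun k => if ∃ n : ℕ, k = r ^ n then 1 else 0

theorem sumXPowPow_eq_X_add_expand {R : Type*} [CommRing R] {r : ℕ} (hr : 2 ≤ r) :
    sumXPowPow R r = X + expand r (by omega) (sumXPowPow R r) := by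
  classical
  ext k
  have hr1 : ¬ r ∣ 1 := by rw [Nat.dvd_one]; omega
  have hk := Nat.exists_eq_pow_iff hr (n := k)
  simp only [sumXPowPow, map_add, coeff_X, coeff_expand, coeff_mk]
  split_ifs <;> simp_all

end PowerSeries

theorem theta2_eq_coe_sumXPowPow (p r : ℕ) :
    theta2 p r = (PowerSeries.sumXPowPow (ZMod p) r : LaurentSeries (ZMod p)) := rfl

theorem theta2_eq_single_add_pow (p : ℕ) [Fact p.Prime] {t : ℕ} (ht : t ≠ 0) :
    theta2 p (p ^ t) = HahnSeries.single (1 : ℤ) 1 + theta2 p (p ^ t) ^ p ^ t := by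
  have hr : 2 ≤ p ^ t := Nat.one_lt_pow ht (Fact.out : p.Prime).one_lt
  rw [theta2_eq_coe_sumXPowPow, ← PowerSeries.coe_X, ← PowerSeries.coe_pow,
    ← PowerSeries.coe_add, PowerSeries.pow_char_pow_eq_expand,
    ← PowerSeries.sumXPowPow_eq_X_add_expand hr]

namespace Polynomial

section
variable {R : Type*} [CommRing R] [Nontrivial R] {r : ℕ}

theorem monic_X_pow_sub_X_add_C (hr : 2 ≤ r) (a : R) : (X ^ r - X + C a).Monic := by
  monicity!
  simp [show ¬(r ≤ 1) by omega]
  omega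

theorem natDegree_X_pow_sub_X_add_C (hr : 2 ≤ r) (a : R) :
    (X ^ r - X + C a).natDegree = r := by
  compute_degree!
  · simp [show (1 : ℕ) ≠ r by omega, show r ≠ 0 by omega]
  · omega

end

theorem irreducible_X_pow_sub_X_add_C_X {R : Type*} [CommRing R] [IsDomain R] (r : ℕ) :
    Irreducible (X ^ r - X + C X : R[X][X]) := by
  have h : Bivariate.swap (X ^ r - X + C X : R[X][X]) = X - C (X - X ^ r) := by
    simp only [map_add, map_sub, map_pow, Bivariate.swap_X, Bivariate.swap_Y]
    ring
  rw [← MulEquiv.irreducible_iff (Bivariate.swap (R := R)), h]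
  exact irreducible_X_sub_C _

theorem irreducible_X_pow_sub_X_add_C_ratFuncX {F : Type*} [Field F] {r : ℕ} (hr : 2 ≤ r) :
    Irreducible (X ^ r - X + C RatFunc.X : (RatFunc F)[X]) := by
  have h := ((monic_X_pow_sub_X_add_C hr (X : F[X])).isPrimitive
    |>.irreducible_iff_irreducible_map_fraction_map (K := RatFunc F)).mp
    (irreducible_X_pow_sub_X_add_C_X r)
  simpa [RatFunc.algebraMap_X] using h

end Polynomial

theorem minpoly_eq_X_pow_sub_X_add_C_of_eq_X_add_pow {F L : Type*} [Field F] [CommRing L]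
    [Algebra (RatFunc F) L] [Nontrivial L] {r : ℕ} (hr : 2 ≤ r) {θ : L}
    (h : θ = algebraMap (RatFunc F) L RatFunc.X + θ ^ r) :
    minpoly (RatFunc F) θ = X ^ r - X + C RatFunc.X := by
  refine (minpoly.eq_of_irreducible_of_monic (irreducible_X_pow_sub_X_add_C_ratFuncX hr) ?_
    (monic_X_pow_sub_X_add_C hr _)).symm
  simp only [map_add, map_sub, map_pow, aeval_X, aeval_C]
  linear_combination -h

open scoped RatFunc

/-- `Θ₂` satisfies `Θ₂ = 1/T + Θ₂^r` (here `1/T` is `HahnSeries.single 1 1`, i.e. `X`),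
and `Θ₂` is algebraic over the rational function field `F_p(T) = F_p(X)` of degree
exactly `r`, where `r = p^t` with `t ≥ 1`. -/
theorem stmt7 (p : ℕ) [Fact p.Prime] (t : ℕ) (ht : 1 ≤ t) :
    theta2 p (p ^ t) = HahnSeries.single (1 : ℤ) 1 + theta2 p (p ^ t) ^ p ^ t ∧
    IsAlgebraic (RatFunc (ZMod p)) (theta2 p (p ^ t)) ∧
    (minpoly (RatFunc (ZMod p)) (theta2 p (p ^ t))).natDegree = p ^ t := by
  have hr : 2 ≤ p ^ t := Nat.one_lt_pow (by omega) (Fact.out : p.Prime).one_lt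
  have hθ := theta2_eq_single_add_pow p (t := t) (by omega)
  have hX : algebraMap (RatFunc (ZMod p)) (LaurentSeries (ZMod p)) RatFunc.X =
      HahnSeries.single 1 1 := RatFunc.coe_X
  have hmin := minpoly_eq_X_pow_sub_X_add_C_of_eq_X_add_pow hr (by rwa [hX])
  refine ⟨hθ, ?_, by rw [hmin, natDegree_X_pow_sub_X_add_C hr]⟩
  refine IsIntegral.isAlgebraic (minpoly.ne_zero_iff.mp ?_)
  rw [hmin]
  exact (monic_X_pow_sub_X_add_C hr _).ne_zero
end

section
/- The algebraic equation X^4 + X^2 - T·X + 1 = 0 has exactly one root α in the field F_3((T^{-1})) of formal power series in 1/T over the finite field F_3. -/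
/-!
Write `X = T⁻¹` for the variable of `K⸨X⸩`, so that `T = single (-1) 1` has valuation `exp 1`.
If a root `α` had `1 < v α`, then `v α ≥ exp 1` by discreteness and `α⁴` would dominate the
other three terms, so every root is integral. For two roots `y, z`, the difference of their
equations is `(y - z) * (y³ + y²z + yz² + z³ + y + z - T)`, and the cofactor is nonzero because
its integral part cannot cancel `T`. A root exists by Hensel's lemma in `K⟦X⟧`: substituting
`α = X / δ` turns the equation into `δ⁴ - δ³ + X²δ² + X⁴ = 0`, which has the simple root `1`
modulo `X`.
-/

open PowerSeries LaurentSeries HahnSeries WithZero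

variable {K : Type*} [Field K]

namespace PowerSeries

theorem exists_quartic_root_constantCoeff_eq_one :
    ∃ δ : K⟦X⟧, δ ^ 4 - δ ^ 3 + X ^ 2 * δ ^ 2 + X ^ 4 = 0 ∧ constantCoeff δ = 1 := by
  set f : Polynomial K⟦X⟧ := .X ^ 4 - .X ^ 3 + .C (X ^ 2) * .X ^ 2 + .C (X ^ 4)
  have hf : f.Monic := by simp only [f]; monicity!
  have hf_one : f.eval 1 = X ^ 2 + X ^ 4 := by simp [f]
  have hf'_one : f.derivative.eval 1 = 1 + X ^ 2 * 2 := by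
    norm_num [f, Polynomial.derivative_pow]
  have hX_sq : (X : K⟦X⟧) ^ 2 ∈ Ideal.span {X} :=
    Ideal.mem_span_singleton.mpr (dvd_pow_self X two_ne_zero)
  obtain ⟨δ, hroot, hδ⟩ := HenselianRing.is_henselian (I := Ideal.span {X}) f hf 1
    (hf_one ▸ Ideal.mem_span_singleton.mpr
      (dvd_add (dvd_pow_self X two_ne_zero) (dvd_pow_self X four_ne_zero)))
    (by
      rw [hf'_one, map_add, map_one,
        Ideal.Quotient.eq_zero_iff_mem.mpr (Ideal.mul_mem_right 2 _ hX_sq), add_zero]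
      exact isUnit_one)
  refine ⟨δ, by simpa [f] using hroot, ?_⟩
  rwa [Ideal.mem_span_singleton, X_dvd_iff, map_sub, map_one, sub_eq_zero] at hδ

end PowerSeries

namespace LaurentSeries

theorem single_neg_one_mul_X : (single (-1) 1 : K⸨X⸩) * (X : K⟦X⟧) = 1 := by
  rw [ofPowerSeries_X, single_mul_single]
  simp

theorem valuation_single_neg_one : Valued.v (single (-1) 1 : K⸨X⸩) = exp 1 := by
  simpa using valuation_single_zpow (K := K) (-1)

abbrev IsQuarticRoot (α : K⸨X⸩) : Prop :=
  α ^ 4 + α ^ 2 - single (-1) 1 * α + 1 = 0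

theorem exists_isQuarticRoot : ∃ α : K⸨X⸩, IsQuarticRoot α := by
  obtain ⟨δ, hδ, hδ_one⟩ := exists_quartic_root_constantCoeff_eq_one (K := K)
  have hδ_ne : (δ : K⸨X⸩) ≠ 0 := (map_ne_zero_iff _ ofPowerSeries_injective).mpr
    (ne_of_apply_ne constantCoeff (by simp [hδ_one]))
  refine ⟨(X : K⟦X⟧) / (δ : K⸨X⸩), ?_⟩
  have h := congrArg (ofPowerSeries ℤ K) hδ
  push_cast at h
  field_simp
  linear_combination h - (δ : K⸨X⸩) ^ 3 * single_neg_one_mul_X (K := K)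

theorem IsQuarticRoot.valuation_le_one {α : K⸨X⸩} (h : IsQuarticRoot α) :
    Valued.v α ≤ 1 := by
  by_contra! hlt
  obtain ⟨m, hv⟩ : ∃ m, Valued.v α = exp m := ⟨_, (exp_log (ne_zero_of_lt hlt)).symm⟩
  have hm : 0 < m := by rwa [hv, ← exp_zero, exp_lt_exp] at hlt
  have hlower : Valued.v (α ^ 2 - single (-1) 1 * α + 1) < Valued.v (α ^ 4) := by
    rw [map_pow, hv, ← exp_nsmul]
    refine Valuation.map_add_lt _ (Valuation.map_sub_lt _ ?_ ?_) ?_ <;>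
      simp only [map_pow, map_mul, map_one, ← exp_zero, hv, valuation_single_neg_one,
        ← exp_nsmul, ← exp_add, exp_lt_exp, nsmul_eq_mul, Nat.cast_ofNat] <;>
      omega
  have hsum := Valuation.map_add_eq_of_lt_left _ hlower
  rw [show α ^ 4 + (α ^ 2 - single (-1) 1 * α + 1) = 0 by linear_combination h, map_zero,
    map_pow, hv, ← exp_nsmul] at hsum
  exact exp_ne_zero hsum.symm

theorem IsQuarticRoot.eq {y z : K⸨X⸩} (hy : IsQuarticRoot y) (hz : IsQuarticRoot z) :
    y = z := by
  set S := y ^ 3 + y ^ 2 * z + y * z ^ 2 + z ^ 3 + y + z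
  have hfactor : (y - z) * (S - single (-1) 1) = 0 := by linear_combination hy - hz
  have hy₁ : y ∈ Valued.v.integer := hy.valuation_le_one
  have hz₁ : z ∈ Valued.v.integer := hz.valuation_le_one
  have hS : Valued.v S < Valued.v (single (-1) 1 : K⸨X⸩) := by
    have hS₁ : S ∈ Valued.v.integer := by apply_rules [pow_mem, add_mem, mul_mem]
    rw [valuation_single_neg_one]
    exact lt_of_le_of_lt hS₁ (exp_lt_exp.mpr zero_lt_one)
  have hcofactor : S - single (-1) 1 ≠ 0 := sub_ne_zero.mpr fun h => hS.ne (congrArg _ h)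
  exact sub_eq_zero.mp ((mul_eq_zero.mp hfactor).resolve_right hcofactor)

theorem existsUnique_isQuarticRoot : ∃! α : K⸨X⸩, IsQuarticRoot α :=
  let ⟨α, hα⟩ := exists_isQuarticRoot (K := K)
  ⟨α, hα, fun _ hy => hy.eq hα⟩

end LaurentSeries

/-- The equation `X⁴ + X² - T·X + 1 = 0` has exactly one root in `F_3((T⁻¹))`, realized
as `LaurentSeries (ZMod 3)` in the variable `X = 1/T`, so that `T = HahnSeries.single (-1) 1`. -/
theorem stmt10 :
    ∃! α : LaurentSeries (ZMod 3),
      α ^ 4 + α ^ 2 - HahnSeries.single (-1 : ℤ) 1 * α + 1 = 0 :=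
  LaurentSeries.existsUnique_isQuarticRoot
end

section
/- Let (W_n)_{n≥0} be the sequence of finite words over the alphabet {1, 2} defined by W_0 = ∅ (the empty word), W_1 = 1, and W_n = W_{n-1} · 2 · W_{n-2} · 2 · W_{n-1} for all n ≥ 2, where · denotes concatenation. Let σ be the substitution on the alphabet {a, b, c} given by σ(a) = abca, σ(b) = ca, σ(c) = c, and let o be the coding with o(a) = 1 and o(b) = o(c) = 2, applied letterwise to words. Then for all integers n ≥ 0, o(σ^n(a)) = W_{n+1}. -/
/-- The words `W₀ = ε`, `W₁ = 1`, `Wₙ = Wₙ₋₁ · 2 · Wₙ₋₂ · 2 · Wₙ₋₁` over the alphabet `{1, 2}`. -/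
def W : ℕ → List ℕ
  | 0 => []
  | 1 => [1]
  | n + 2 => W (n + 1) ++ [2] ++ W n ++ [2] ++ W (n + 1)

/-- The substitution `σ` on the alphabet `{a, b, c}` (encoded as `Fin 3`, with `a = 0`,
`b = 1`, `c = 2`): `σ(a) = abca`, `σ(b) = ca`, `σ(c) = c`. -/
def sub : Fin 3 → List (Fin 3) := ![[0, 1, 2, 0], [2, 0], [2]]

/-- The extension of the substitution `σ` to words, as a morphism of the free monoid. -/
def subWord (w : List (Fin 3)) : List (Fin 3) := w.flatMap sub

/-- The coding `o` with `o(a) = 1`, `o(b) = o(c) = 2`. -/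
def code : Fin 3 → ℕ := ![1, 2, 2]

lemma subWord_append (u v : List (Fin 3)) : subWord (u ++ v) = subWord u ++ subWord v := by
  simp [subWord]

lemma iter_append (n : ℕ) (u v : List (Fin 3)) :
    subWord^[n] (u ++ v) = subWord^[n] u ++ subWord^[n] v := by
  induction n generalizing u v with
  | zero => rfl
  | succ n ih => rw [Function.iterate_succ_apply, Function.iterate_succ_apply,
      Function.iterate_succ_apply, subWord_append, ih]

lemma iter_c (n : ℕ) : subWord^[n] [2] = [2] := by
  induction n with
  | zero => rfl
  | succ n ih => rw [Function.iterate_succ_apply]; simpa [subWord, sub] using ih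

/-- For all `n ≥ 0`, `o(σⁿ(a)) = W_{n+1}`. -/
theorem stmt12 : ∀ n : ℕ, (subWord^[n] [0]).map code = W (n + 1) := by
  suffices h : ∀ n : ℕ, (subWord^[n] [0]).map code = W (n + 1) ∧
      (subWord^[n] [1]).map code = [2] ++ W n from fun n => (h n).1
  intro n
  induction n with
  | zero => constructor <;> simp [W, code]
  | succ n ih =>
    obtain ⟨ha, hb⟩ := ih
    have h0 : subWord [0] = [0] ++ [1] ++ [2] ++ [0] := by simp [subWord, sub]
    have h1 : subWord [1] = [2] ++ [0] := by simp [subWord, sub]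
    constructor
    · rw [Function.iterate_succ_apply, h0, iter_append, iter_append, iter_append, iter_c]
      rw [List.map_append, List.map_append, List.map_append, ha, hb]
      show _ = W (n + 2)
      simp [W, code]
    · rw [Function.iterate_succ_apply, h1, iter_append, iter_c]
      rw [List.map_append, ha]; rfl
end

section
/- Let (W_n)_{n≥0} be the sequence of finite words over the alphabet {1, 2} defined by W_0 = ∅, W_1 = 1, and W_n = W_{n-1} · 2 · W_{n-2} · 2 · W_{n-1} for all n ≥ 2. Let l_n denote the length of W_n and m_n the number of occurrences of the letter 2 in W_n. Then the sequence (m_n / l_n)_{n≥1} converges and lim_{n→∞} m_n / l_n = 2 - √2. -/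
def Pell' : ℕ → ℕ
  | 0 => 0
  | 1 => 1
  | n + 2 => 2 * Pell' (n + 1) + Pell' n

lemma W_len : ∀ n, (W n).length + 1 = Pell' (n + 1)
  | 0 => rfl
  | 1 => rfl
  | n + 2 => by
    have h1 : (W (n + 1)).length + 1 = Pell' (n + 2) := W_len (n + 1)
    have h0 := W_len n
    show (W (n + 2)).length + 1 = Pell' (n + 3)
    have e3 : Pell' (n + 3) = 2 * Pell' (n + 2) + Pell' (n + 1) := rfl
    have e2 : Pell' (n + 2) = 2 * Pell' (n + 1) + Pell' n := rfl
    simp only [W, List.length_append, List.length_cons, List.length_nil]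
    omega

lemma W_cnt : ∀ n, (W n).count 2 + Pell' n + 1 = Pell' (n + 1)
  | 0 => by decide
  | 1 => by decide
  | n + 2 => by
    have h1 : (W (n + 1)).count 2 + Pell' (n + 1) + 1 = Pell' (n + 2) := W_cnt (n + 1)
    have h0 := W_cnt n
    show (W (n + 2)).count 2 + Pell' (n + 2) + 1 = Pell' (n + 3)
    have e3 : Pell' (n + 3) = 2 * Pell' (n + 2) + Pell' (n + 1) := rfl
    have e2 : Pell' (n + 2) = 2 * Pell' (n + 1) + Pell' n := rfl
    simp only [W, List.count_append, List.count_singleton]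
    norm_num
    omega

lemma Pell'_ge : ∀ n, n ≤ Pell' n
  | 0 => by simp [Pell']
  | 1 => by simp [Pell']
  | n + 2 => by
    have h1 := Pell'_ge (n + 1)
    have h0 := Pell'_ge n
    simp only [Pell']
    omega

lemma Pell'_closed : ∀ n, (Pell' n : ℝ) * (2 * Real.sqrt 2)
    = (1 + Real.sqrt 2) ^ n - (1 - Real.sqrt 2) ^ n
  | 0 => by simp [Pell']
  | 1 => by simp [Pell']; ring
  | n + 2 => by
    have h1 := Pell'_closed (n + 1)
    have h0 := Pell'_closed n
    have h2 : Real.sqrt 2 ^ 2 = 2 := Real.sq_sqrt (by norm_num)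
    push_cast [Pell']
    linear_combination 2 * h1 + h0 + ((1 - Real.sqrt 2) ^ n - (1 + Real.sqrt 2) ^ n) * h2

/-- The frequency `mₙ / lₙ` of the letter `2` in `Wₙ` converges to `2 - √2`. -/
theorem stmt15 :
    Filter.Tendsto (fun n : ℕ => ((W n).count 2 : ℝ) / ((W n).length : ℝ))
      Filter.atTop (nhds (2 - Real.sqrt 2)) := by
  set s := Real.sqrt 2 with hs
  have h2 : s ^ 2 = 2 := Real.sq_sqrt (by norm_num)
  have hs0 : 0 ≤ s := Real.sqrt_nonneg 2
  have hs1 : 1 < s := by nlinarith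
  have hs2 : s < 2 := by nlinarith
  have key : ∀ n : ℕ, 1 ≤ n →
      ‖(((W n).count 2 : ℝ) / ((W n).length : ℝ)) - (2 - s)‖ ≤ 1 / n := by
    intro n hn
    have hl := W_len n
    have hc := W_cnt n
    have hp1 := Pell'_closed (n + 1)
    have hp0 := Pell'_closed n
    have hD : ((W n).length : ℝ) = (Pell' (n + 1) : ℝ) - 1 := by
      have : ((W n).length : ℝ) + 1 = (Pell' (n + 1) : ℝ) := by exact_mod_cast hl
      linarith
    have hm : ((W n).count 2 : ℝ) = (Pell' (n + 1) : ℝ) - (Pell' n : ℝ) - 1 := by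
      have : ((W n).count 2 : ℝ) + (Pell' n : ℝ) + 1 = (Pell' (n + 1) : ℝ) := by
        exact_mod_cast hc
      linarith
    have hDge : (n : ℝ) ≤ ((W n).length : ℝ) := by
      have h1 : n + 1 ≤ Pell' (n + 1) := Pell'_ge (n + 1)
      have : n ≤ (W n).length := by omega
      exact_mod_cast this
    have hDpos : 0 < ((W n).length : ℝ) := by
      have : (0 : ℝ) < n := by exact_mod_cast hn
      linarith
    -- numerator identity, scaled by 2s
    have hNs : (((W n).count 2 : ℝ) - (2 - s) * ((W n).length : ℝ)) * (2 * s)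
        = ((s - 1) * ((1 - s) ^ n - 1)) * (2 * s) := by
      rw [hm, hD]
      linear_combination (s - 1) * hp1 - hp0 + ((1 + s) ^ n - (1 - s) ^ n) * h2
    have hsne : (2 * s : ℝ) ≠ 0 := by positivity
    have hN : ((W n).count 2 : ℝ) - (2 - s) * ((W n).length : ℝ)
        = (s - 1) * ((1 - s) ^ n - 1) := by
      exact mul_right_cancel₀ hsne hNs
    have hratio : ((W n).count 2 : ℝ) / ((W n).length : ℝ) - (2 - s)
        = ((s - 1) * ((1 - s) ^ n - 1)) / ((W n).length : ℝ) := by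
      rw [← hN]; field_simp
    rw [hratio, Real.norm_eq_abs, abs_div, abs_of_pos hDpos]
    have habs : |(1 - s) ^ n| ≤ 1 := by
      rw [abs_pow]
      apply pow_le_one₀ (abs_nonneg _)
      rw [abs_le]; constructor <;> nlinarith
    have hnum : |(s - 1) * ((1 - s) ^ n - 1)| ≤ 1 := by
      rw [abs_mul]
      have h' : |(1 - s) ^ n - 1| ≤ 2 := by
        calc |(1 - s) ^ n - 1| ≤ |(1 - s) ^ n| + 1 := by
              simpa using abs_sub (((1 - s) ^ n)) (1 : ℝ)
          _ ≤ 2 := by linarith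
      have h'' : |s - 1| = s - 1 := abs_of_pos (by linarith)
      rw [h'']
      nlinarith [abs_nonneg ((1 - s) ^ n - 1)]
    have hnpos : (0 : ℝ) < n := by exact_mod_cast hn
    calc |(s - 1) * ((1 - s) ^ n - 1)| / ((W n).length : ℝ)
        ≤ 1 / ((W n).length : ℝ) := by gcongr
      _ ≤ 1 / n := by gcongr
  have h0 : Filter.Tendsto
      (fun n : ℕ => (((W n).count 2 : ℝ) / ((W n).length : ℝ)) - (2 - s))
      Filter.atTop (nhds 0) := by
    have hbound : ∀ᶠ n : ℕ in Filter.atTop,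
        ‖(((W n).count 2 : ℝ) / ((W n).length : ℝ)) - (2 - s)‖ ≤ 1 / (n : ℝ) := by
      filter_upwards [Filter.eventually_ge_atTop 1] with n hn using key n hn
    exact squeeze_zero_norm' hbound tendsto_one_div_atTop_nhds_zero_nat
  have := h0.add_const (2 - s)
  simpa using this
end

section
/- Let (W_n)_{n≥0} be the sequence of finite words over the alphabet {1, 2} defined by W_0 = ∅, W_1 = 1, and W_n = W_{n-1} · 2 · W_{n-2} · 2 · W_{n-1} for all n ≥ 2, and let W = (W(n))_{n≥1} be the infinite word beginning with W_n for all n. Then for every integer k ≥ 2, the k-kernel of W, namely the set {(W(k^i n + j))_{n≥1} : i ≥ 0, 0 ≤ j < k^i}, is infinite; i.e., W is not k-automatic for any k ≥ 2. -/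
/-- The `k`-kernel of a sequence `v`. -/
def kernelK (k : ℕ) (v : ℕ → ℕ) : Set (ℕ → ℕ) :=
  {w | ∃ i j : ℕ, j < k ^ i ∧ w = fun n => v (k ^ i * n + j)}

def IsNearInt (c x : ℝ) : Prop := ∃ z : ℤ, |x - z| < c

namespace IsNearInt

variable {c x : ℝ}

lemma add_intCast (h : IsNearInt c x) (z : ℤ) : IsNearInt c (x + z) := by
  obtain ⟨w, hw⟩ := h
  exact ⟨w + z, by push_cast; convert hw using 2; ring⟩

lemma add_intCast_iff (z : ℤ) : IsNearInt c (x + z) ↔ IsNearInt c x :=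
  ⟨fun h => by simpa using h.add_intCast (-z), fun h => h.add_intCast z⟩

lemma neg (h : IsNearInt c x) : IsNearInt c (-x) := by
  obtain ⟨w, hw⟩ := h
  exact ⟨-w, by rw [← abs_neg]; push_cast; convert hw using 2; ring⟩

lemma neg_iff : IsNearInt c (-x) ↔ IsNearInt c x :=
  ⟨fun h => neg_neg x ▸ h.neg, neg⟩

lemma abs_iff : IsNearInt c |x| ↔ IsNearInt c x := by
  rcases abs_choice x with h | h <;> rw [h]
  exact neg_iff

lemma add_iff {ε : ℝ} (h : ∀ z : ℤ, |ε| < |x - (z + c)| ∧ |ε| < |x - (z - c)|) :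
    IsNearInt c (x + ε) ↔ IsNearInt c x := by
  constructor <;> rintro ⟨z, hz⟩ <;> refine ⟨z, ?_⟩ <;> obtain ⟨h₁, h₂⟩ := h z <;>
    rw [abs_lt] at hz ⊢ <;> rw [lt_abs] at h₁ h₂ <;> constructor <;>
    cases abs_cases ε <;> grind

end IsNearInt

def pellNumber : ℕ → ℕ
  | 0 => 0
  | 1 => 1
  | n + 2 => 2 * pellNumber (n + 1) + pellNumber n

def halfCompanionPell : ℕ → ℕ
  | 0 => 1
  | 1 => 1
  | n + 2 => 2 * halfCompanionPell (n + 1) + halfCompanionPell n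

local notation "P" => pellNumber
local notation "Q" => halfCompanionPell

lemma le_pellNumber (n : ℕ) : n ≤ P n := by
  induction n using Nat.twoStepInduction with
  | zero => rfl
  | one => rfl
  | more n ih₀ ih₁ => rw [pellNumber]; omega

lemma halfCompanionPell_add_pellNumber_mul {σ : ℝ} (hσ : σ ^ 2 = 2) (n : ℕ) :
    (Q n : ℝ) + P n * σ = (1 + σ) ^ n := by
  induction n using Nat.twoStepInduction with
  | zero => simp [pellNumber, halfCompanionPell]
  | one => simp [pellNumber, halfCompanionPell]
  | more n ih₀ ih₁ =>
    simp only [pellNumber, halfCompanionPell]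
    push_cast
    linear_combination 2 * ih₁ + ih₀ - (1 + σ) ^ n * hσ

lemma sq_sqrt_two : √2 ^ 2 = 2 := Real.sq_sqrt zero_le_two

lemma sqrt_two_sub_one_pos : 0 < √2 - 1 := sub_pos.2 Real.one_lt_sqrt_two

lemma sqrt_two_sub_one_pow_le {m n : ℕ} (h : m ≤ n) : (√2 - 1) ^ n ≤ (√2 - 1) ^ m :=
  pow_le_pow_of_le_one sqrt_two_sub_one_pos.le
    (by linarith [Real.sqrt_two_lt_three_halves]) h

lemma pellNumber_mul_sqrt_two_sub (n : ℕ) : (P n : ℝ) * √2 - Q n = -(1 - √2) ^ n := by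
  have := halfCompanionPell_add_pellNumber_mul (σ := -√2) (by simp) n
  linear_combination -this

lemma abs_one_sub_sqrt_two_pow (n : ℕ) : |(1 - √2) ^ n| = (√2 - 1) ^ n := by
  rw [abs_pow, abs_sub_comm, abs_of_pos sqrt_two_sub_one_pos]

lemma abs_pellNumber_mul_sqrt_two_sub (n : ℕ) : |(P n : ℝ) * √2 - Q n| = (√2 - 1) ^ n := by
  rw [pellNumber_mul_sqrt_two_sub, abs_neg, abs_one_sub_sqrt_two_pow]

lemma two_mul_pellNumber_mul_sqrt_two_mul_pow_le (n : ℕ) :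
    2 * P n * √2 * (√2 - 1) ^ n ≤ 1 + (√2 - 1) ^ (2 * n) := by
  have hadd := halfCompanionPell_add_pellNumber_mul sq_sqrt_two n
  have hsub := pellNumber_mul_sqrt_two_sub n
  have hunit : ((1 + √2) * (√2 - 1)) ^ n = 1 := by
    rw [show (1 + √2) * (√2 - 1) = 1 by linear_combination sq_sqrt_two, one_pow]
  have herr : -((1 - √2) ^ n * (√2 - 1) ^ n) ≤ (√2 - 1) ^ (2 * n) := by
    refine (neg_le_abs _).trans_eq ?_
    rw [abs_mul, abs_one_sub_sqrt_two_pow, abs_of_pos (pow_pos sqrt_two_sub_one_pos n),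
      ← pow_add, two_mul]
  calc 2 * P n * √2 * (√2 - 1) ^ n
      = ((1 + √2) * (√2 - 1)) ^ n - (1 - √2) ^ n * (√2 - 1) ^ n := by
        rw [mul_pow]; linear_combination (√2 - 1) ^ n * (hadd + hsub)
    _ ≤ 1 + (√2 - 1) ^ (2 * n) := by rw [hunit]; linarith

lemma two_le_abs_mul_sqrt_two_sub_mul_abs_add {t b : ℤ} (ht : Odd t) (hb : Even b) :
    2 ≤ |t * √2 - b| * |t * √2 + b| := by
  obtain ⟨b, rfl⟩ := hb
  have hodd : Odd (t ^ 2 - 2 * b ^ 2) := ht.pow.sub_even (even_two_mul _)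
  have hne : t ^ 2 - 2 * b ^ 2 ≠ 0 := by rintro h; simp [h] at hodd
  rw [← abs_mul, show (t * √2 - (b + b : ℤ)) * (t * √2 + (b + b : ℤ))
      = 2 * ((t ^ 2 - 2 * b ^ 2 : ℤ) : ℝ) by
    push_cast; linear_combination (t : ℝ) ^ 2 * sq_sqrt_two, abs_mul, abs_two]
  have : (1 : ℝ) ≤ |((t ^ 2 - 2 * b ^ 2 : ℤ) : ℝ)| := by
    rw [← Int.cast_abs]; exact_mod_cast Int.one_le_abs hne
  linarith

lemma two_mul_pow_lt_abs_mul_sqrt_two_sub {k t : ℕ} {b : ℤ} (ht : Odd t) (hb : Even b)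
    (htk : t < 2 * P (k + 1)) : 2 * (√2 - 1) ^ (k + 2) < |t * √2 - b| := by
  by_contra! hsmall
  set δ : ℝ := t * √2 - b
  set L : ℝ := (√2 - 1) ^ (k + 1) with hL
  have hl_pos := sqrt_two_sub_one_pos
  have hl_half : √2 - 1 < 1 / 2 := by linarith [Real.sqrt_two_lt_three_halves]
  have hL0 : 0 < L := by positivity
  have hL1 : L ≤ 1 := pow_le_one₀ hl_pos.le (by linarith)
  have hsmall' : |δ| ≤ 2 * (√2 - 1) * L := by rwa [hL, mul_assoc, ← pow_succ']
  have hprod := two_le_abs_mul_sqrt_two_sub_mul_abs_add (t := t) (b := b)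
    (by exact_mod_cast ht.natCast) hb
  push_cast at hprod
  have hsum : |t * √2 + b| ≤ 2 * t * √2 + |δ| := by
    rw [show (t : ℝ) * √2 + b = 2 * t * √2 - δ by ring]
    refine (abs_sub _ _).trans ?_
    rw [abs_of_nonneg (by positivity)]
  have hpell := two_mul_pellNumber_mul_sqrt_two_mul_pow_le (k + 1)
  rw [← hL, pow_mul', ← hL, sq] at hpell
  have ht' : (t : ℝ) ≤ 2 * P (k + 1) - 1 := by
    have : (t : ℝ) + 1 ≤ 2 * P (k + 1) := by exact_mod_cast htk
    linarith
  have htα : 2 * (√2 - 1) * L * (t * √2)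
      ≤ 2 * (√2 - 1) * (1 + L * L) - 2 * (√2 - 1) * L * √2 := by
    have := mul_le_mul_of_nonneg_left (mul_le_mul_of_nonneg_right ht' (Real.sqrt_nonneg 2))
      (by positivity : (0 : ℝ) ≤ 2 * (√2 - 1) * L)
    nlinarith
  have : 2 ≤ 2 * (√2 - 1) * L * (2 * t * √2 + 2 * (√2 - 1) * L) :=
    hprod.trans (mul_le_mul hsmall' (hsum.trans (by linarith)) (abs_nonneg _) (by positivity))
  -- by `htα` the right-hand side is below `4 (√2 - 1) < 2`
  nlinarith [mul_nonneg (mul_pos hl_pos hL0).le (sub_nonneg.2 hL1), Real.one_lt_sqrt_two]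

lemma isNearInt_natCast_mul_sqrt_two_add_iff {k s : ℕ} (hs : 0 < s) (hsk : s < P (k + 1))
    {ε : ℝ} (hε : |ε| ≤ (√2 - 1) ^ (k + 2)) :
    IsNearInt (1 - √2 / 2) (s * √2 + ε) ↔ IsNearInt (1 - √2 / 2) (s * √2) := by
  refine IsNearInt.add_iff fun z => ⟨?_, ?_⟩
  · have := two_mul_pow_lt_abs_mul_sqrt_two_sub (k := k) (t := 2 * s + 1) (b := 2 * z + 2)
      (odd_two_mul_add_one s) ⟨z + 1, by ring⟩ (by omega)
    rw [show (s : ℝ) * √2 - (z + (1 - √2 / 2))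
        = (((2 * s + 1 : ℕ) : ℝ) * √2 - (2 * z + 2 : ℤ)) / 2 by push_cast; ring,
      abs_div, abs_two]
    linarith
  · have := two_mul_pow_lt_abs_mul_sqrt_two_sub (k := k) (t := 2 * s - 1) (b := 2 * z - 2)
      ⟨s - 1, by omega⟩ ⟨z - 1, by ring⟩ (by omega)
    rw [show (s : ℝ) * √2 - (z - (1 - √2 / 2))
        = (((2 * s - 1 : ℕ) : ℝ) * √2 - (2 * z - 2 : ℤ)) / 2 by
          rw [Nat.cast_sub (by omega)]; push_cast; ring,
      abs_div, abs_two]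
    linarith

open Classical in
noncomputable def sqrtTwoLetter (r : ℕ) : ℕ := if IsNearInt (1 - √2 / 2) (r * √2) then 2 else 1

open Classical in
lemma sqrtTwoLetter_congr {r s : ℕ}
    (h : IsNearInt (1 - √2 / 2) (r * √2) ↔ IsNearInt (1 - √2 / 2) (s * √2)) :
    sqrtTwoLetter r = sqrtTwoLetter s :=
  if_congr h rfl rfl

open Classical in
lemma sqrtTwoLetter_of_isNearInt {r : ℕ} (h : IsNearInt (1 - √2 / 2) (r * √2)) :
    sqrtTwoLetter r = 2 :=
  if_pos h

open Classical in
lemma sqrtTwoLetter_of_not_isNearInt {r : ℕ} (h : ¬ IsNearInt (1 - √2 / 2) (r * √2)) :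
    sqrtTwoLetter r = 1 :=
  if_neg h

lemma sqrtTwoLetter_one : sqrtTwoLetter 1 = 1 := by
  refine sqrtTwoLetter_of_not_isNearInt ?_
  rintro ⟨z, hz⟩
  have h43 : 4 / 3 < √2 := by nlinarith [sq_sqrt_two, Real.sqrt_nonneg 2]
  rw [Nat.cast_one, one_mul, abs_lt] at hz
  rcases le_or_gt z 1 with hz1 | hz1
  · have : (z : ℝ) ≤ 1 := by exact_mod_cast hz1
    linarith
  · have : (2 : ℝ) ≤ z := by exact_mod_cast hz1
    linarith [Real.sqrt_two_lt_three_halves]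

lemma sqrt_two_sub_one_sq_add_cube_lt : (√2 - 1) ^ 2 + (√2 - 1) ^ 3 < 1 - √2 / 2 := by
  have : √2 < 10 / 7 := by nlinarith [sq_sqrt_two, Real.sqrt_nonneg 2]
  nlinarith [sq_sqrt_two]

lemma sqrtTwoLetter_pellNumber_add_two (k : ℕ) : sqrtTwoLetter (P (k + 2)) = 2 := by
  refine sqrtTwoLetter_of_isNearInt ⟨Q (k + 2), ?_⟩
  rw [Int.cast_natCast, abs_pellNumber_mul_sqrt_two_sub]
  have := sqrt_two_sub_one_pow_le (show 2 ≤ k + 2 by omega)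
  have := pow_pos sqrt_two_sub_one_pos 3
  linarith [sqrt_two_sub_one_sq_add_cube_lt]

lemma sqrtTwoLetter_pellNumber_add {k s : ℕ} (hs : 0 < s) (hsk : s < P (k + 1)) :
    sqrtTwoLetter (P (k + 2) + s) = sqrtTwoLetter s := by
  have hshift : ((P (k + 2) + s : ℕ) : ℝ) * √2
      = s * √2 + (P (k + 2) * √2 - Q (k + 2)) + (Q (k + 2) : ℤ) := by
    push_cast; ring
  refine sqrtTwoLetter_congr ?_
  rw [hshift, IsNearInt.add_intCast_iff,
    isNearInt_natCast_mul_sqrt_two_add_iff hs hsk (abs_pellNumber_mul_sqrt_two_sub _).le]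

lemma sqrtTwoLetter_pellNumber_sub {k r : ℕ} (hr : 0 < r) (hrk : r ≤ P (k + 2)) :
    sqrtTwoLetter (P (k + 3) - r) = sqrtTwoLetter r := by
  have hP : P (k + 3) = 2 * P (k + 2) + P (k + 1) := rfl
  have hreflect : ((P (k + 3) - r : ℕ) : ℝ) * √2
      = -(r * √2 + -(P (k + 3) * √2 - Q (k + 3))) + (Q (k + 3) : ℤ) := by
    rw [Nat.cast_sub (by omega)]; push_cast; ring
  have he := abs_pellNumber_mul_sqrt_two_sub (k + 3)
  rcases hrk.lt_or_eq with hrk | rfl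
  · refine sqrtTwoLetter_congr ?_
    rw [hreflect, IsNearInt.add_intCast_iff, IsNearInt.neg_iff,
      isNearInt_natCast_mul_sqrt_two_add_iff hr hrk ((abs_neg _).trans he).le]
  · rw [sqrtTwoLetter_pellNumber_add_two]
    refine sqrtTwoLetter_of_isNearInt ⟨Q (k + 3) - Q (k + 2), ?_⟩
    rw [Nat.cast_sub (by omega), show ((P (k + 3) : ℝ) - P (k + 2)) * √2
        - ((Q (k + 3) - Q (k + 2) : ℤ) : ℝ)
        = (P (k + 3) * √2 - Q (k + 3)) - (P (k + 2) * √2 - Q (k + 2)) by push_cast; ring]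
    refine (abs_sub _ _).trans_lt ?_
    rw [he, abs_pellNumber_mul_sqrt_two_sub]
    have := sqrt_two_sub_one_pow_le (show 2 ≤ k + 2 by omega)
    have := sqrt_two_sub_one_pow_le (show 3 ≤ k + 3 by omega)
    linarith [sqrt_two_sub_one_sq_add_cube_lt]

lemma length_W_add_one (n : ℕ) : (W n).length + 1 = P (n + 1) := by
  induction n using Nat.twoStepInduction with
  | zero => rfl
  | one => rfl
  | more n ih₀ ih₁ =>
    simp only [W, List.length_append, List.length_singleton]
    rw [pellNumber, ← ih₀, ← ih₁]
    ring

lemma reverse_W (n : ℕ) : (W n).reverse = W n := by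
  induction n using Nat.twoStepInduction with
  | zero => rfl
  | one => rfl
  | more n ih₀ ih₁ => simp [W, ih₀, ih₁]

theorem getElem_W : ∀ (n i : ℕ) (h : i < (W n).length), (W n)[i] = sqrtTwoLetter (i + 1)
  | 0, _, h => absurd h (by simp [W])
  | 1, 0, _ => sqrtTwoLetter_one.symm
  | 1, _ + 1, h => absurd h (by simp [W])
  | m + 2, i, h => by
    have hA : (W (m + 1)).length + 1 = P (m + 2) := length_W_add_one (m + 1)
    have hB : (W m).length + 1 = P (m + 1) := length_W_add_one m
    have hfirst : ∀ j (hj : j < (W (m + 2)).length), j < (W (m + 1)).length + 1 + (W m).length →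
        (W (m + 2))[j] = sqrtTwoLetter (j + 1) := by
      intro j hj hj'
      simp only [W]
      rw [List.getElem_append_left (by simp only [List.length_append, List.length_singleton]; omega),
        List.getElem_append_left (by simp only [List.length_append, List.length_singleton]; omega)]
      simp only [List.getElem_append, List.length_append, List.length_singleton,
        List.getElem_singleton]
      split_ifs with h₁ h₂
      · exact getElem_W (m + 1) j h₂
      · rw [show j + 1 = P (m + 2) by omega, sqrtTwoLetter_pellNumber_add_two]
      · rw [getElem_W m _ (by omega),
          show j + 1 = P (m + 2) + (j - ((W (m + 1)).length + 1) + 1) by omega,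
          sqrtTwoLetter_pellNumber_add (by omega) (by omega)]
    by_cases hi : i < (W (m + 1)).length + 1 + (W m).length
    · exact hfirst i h hi
    · have hlen : (W (m + 2)).length + 1 = P (m + 3) := length_W_add_one (m + 2)
      have hP : P (m + 3) = 2 * P (m + 2) + P (m + 1) := rfl
      rw [List.getElem_of_eq (reverse_W (m + 2)).symm h, List.getElem_reverse,
        hfirst _ (by omega) (by omega),
        show i + 1 = P (m + 3) - ((W (m + 2)).length - 1 - i + 1) by omega,
        sqrtTwoLetter_pellNumber_sub (by omega) (by omega)]

lemma eq_sqrtTwoLetter_of_getD {f : ℕ → ℕ}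
    (hf : ∀ n k : ℕ, k < (W n).length → f (k + 1) = (W n).getD k 0) {r : ℕ} (hr : 0 < r) :
    f r = sqrtTwoLetter r := by
  obtain ⟨i, rfl⟩ : ∃ i, r = i + 1 := ⟨r - 1, by omega⟩
  have hi : i < (W (i + 1)).length := by
    have h₁ : (W (i + 1)).length + 1 = P (i + 2) := length_W_add_one _
    have h₂ := le_pellNumber (i + 2)
    omega
  rw [hf (i + 1) i hi, List.getD_eq_getElem _ _ hi, getElem_W]

lemma Irrational.exists_int_abs_mul_sub_sub_lt {θ : ℝ} (hθ : Irrational θ) (x : ℝ) {η : ℝ} (hη : 0 < η) :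
    ∃ n z : ℤ, |n * θ - z - x| < η := by
  have hdense := dense_addSubgroupClosure_pair_iff.2 (by rwa [div_one] : Irrational (θ / 1))
  obtain ⟨y, hy, hxy⟩ := hdense.exists_dist_lt x hη
  obtain ⟨n, z, rfl⟩ := AddSubgroup.mem_closure_pair.1 hy
  refine ⟨n, -z, ?_⟩
  rw [dist_comm, Real.dist_eq] at hxy
  convert hxy using 2
  simp

lemma one_third_le_abs_add_intCast {x : ℝ} (h₁ : 1 / 3 ≤ x) (h₂ : x ≤ 2 / 3) (w : ℤ) :
    1 / 3 ≤ |x + w| := by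
  rcases le_or_gt 0 w with hw | hw
  · have : (0 : ℝ) ≤ w := by exact_mod_cast hw
    rw [abs_of_nonneg (by linarith)]; linarith
  · have : (w : ℝ) ≤ -1 := by exact_mod_cast (by omega : w ≤ -1)
    rw [abs_of_neg (by linarith)]; linarith

lemma Irrational.exists_not_isNearInt_isNearInt_natCast_mul {θ c : ℝ} (hθ : Irrational θ)
    (hc₁ : 1 / 6 < c) (hc₂ : c < 1 / 3) {q : ℕ} (hq : 2 ≤ q) :
    ∃ n : ℤ, ¬ IsNearInt c (n * θ) ∧ IsNearInt c (q * (n * θ)) := by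
  have hq₀ : (0 : ℝ) < q := by positivity
  obtain ⟨j, hj₃, hj₂⟩ : ∃ j : ℕ, q ≤ 3 * j ∧ 2 * j ≤ q := ⟨q / 2, by omega, by omega⟩
  set x₀ : ℝ := j / q
  have hqx₀ : q * x₀ = j := mul_div_cancel₀ _ hq₀.ne'
  have hx₀ : 1 / 3 ≤ x₀ ∧ x₀ ≤ 2 / 3 := by
    have h₃ : (q : ℝ) ≤ 3 * j := by exact_mod_cast hj₃
    have h₂ : 2 * (j : ℝ) ≤ q := by exact_mod_cast hj₂
    constructor <;> [rw [le_div_iff₀ hq₀]; rw [div_le_iff₀ hq₀]] <;> linarith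
  obtain ⟨n, z, hn⟩ := hθ.exists_int_abs_mul_sub_sub_lt x₀ (η := (1 / 3 - c) / q)
    (div_pos (by linarith) hq₀)
  refine ⟨n, ?_, q * z + j, ?_⟩
  · rintro ⟨w, hw⟩
    have := one_third_le_abs_add_intCast hx₀.1 hx₀.2 (z - w)
    rw [show x₀ + ((z - w : ℤ) : ℝ) = (n * θ - w) - (n * θ - z - x₀) by push_cast; ring] at this
    have hη : (1 / 3 - c) / q ≤ 1 / 3 - c := div_le_self (by linarith) (by norm_cast; omega)
    linarith [abs_sub (n * θ - w) (n * θ - z - x₀)]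
  · rw [show (q : ℝ) * (n * θ) - ((q * z + j : ℤ) : ℝ) = q * (n * θ - z - x₀) by
      push_cast; rw [← hqx₀]; ring, abs_mul, Nat.abs_cast]
    calc (q : ℝ) * |n * θ - z - x₀| < q * ((1 / 3 - c) / q) := by gcongr
      _ = 1 / 3 - c := mul_div_cancel₀ _ hq₀.ne'
      _ < c := by linarith

lemma exists_sqrtTwoLetter_mul_ne {a b : ℕ} (ha : 0 < a) (hab : a < b) (hdvd : a ∣ b) :
    ∃ n, 0 < n ∧ sqrtTwoLetter (a * n) ≠ sqrtTwoLetter (b * n) := by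
  obtain ⟨q, rfl⟩ := hdvd
  have hq : 2 ≤ q := (Nat.lt_mul_iff_one_lt_right ha).1 hab
  obtain ⟨n, hfar, hnear⟩ :=
    (irrational_sqrt_two.natCast_mul ha.ne').exists_not_isNearInt_isNearInt_natCast_mul
      (c := 1 - √2 / 2) (by linarith [Real.sqrt_two_lt_three_halves])
      (by nlinarith [sq_sqrt_two, Real.sqrt_nonneg 2]) hq
  have hn : n ≠ 0 := by
    rintro rfl
    exact hfar ⟨0, by
      rw [Int.cast_zero, zero_mul, sub_self, abs_zero]; linarith [Real.sqrt_two_lt_three_halves]⟩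
  have h₁ : ((a * n.natAbs : ℕ) : ℝ) * √2 = |n * (a * √2)| := by
    simp only [Nat.cast_mul, Nat.cast_natAbs, Int.cast_abs, abs_mul, Nat.abs_cast,
      abs_of_nonneg (Real.sqrt_nonneg 2)]
    ring
  have h₂ : ((a * q * n.natAbs : ℕ) : ℝ) * √2 = |q * (n * (a * √2))| := by
    simp only [Nat.cast_mul, Nat.cast_natAbs, Int.cast_abs, abs_mul, Nat.abs_cast,
      abs_of_nonneg (Real.sqrt_nonneg 2)]
    ring
  refine ⟨n.natAbs, Int.natAbs_pos.2 hn, ?_⟩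
  rw [sqrtTwoLetter_of_not_isNearInt (by rwa [h₁, IsNearInt.abs_iff]),
    sqrtTwoLetter_of_isNearInt (by rwa [h₂, IsNearInt.abs_iff])]
  decide

/-- If `f = (f(n))_{n ≥ 1}` is the infinite word beginning with `Wₙ` for every `n`, then for
every `k ≥ 2` the `k`-kernel of `f` is infinite, i.e. `f` is not `k`-automatic. -/
theorem stmt17 (f : ℕ → ℕ)
    (hf : ∀ n k : ℕ, k < (W n).length → f (k + 1) = (W n).getD k 0) :
    ∀ k : ℕ, 2 ≤ k → (kernelK k f).Infinite := by
  intro k hk hfin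
  obtain ⟨M, M', hMM', hker⟩ := hfin.exists_lt_map_eq_of_forall_mem
    (f := fun i n => f (k ^ i * n + 0)) fun i => (⟨i, 0, by positivity, rfl⟩ : _ ∈ kernelK k f)
  obtain ⟨n, hn, hne⟩ := exists_sqrtTwoLetter_mul_ne (by positivity)
    (Nat.pow_lt_pow_right hk hMM') (pow_dvd_pow k hMM'.le)
  have hfkn := congrFun hker n
  simp only [add_zero] at hfkn
  rw [eq_sqrtTwoLetter_of_getD hf (by positivity), eq_sqrtTwoLetter_of_getD hf (by positivity)]
    at hfkn
  exact hne hfkn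
end
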